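/- arXiv:1704.02561 — 3 statements merged into one kernel-verified Lean document; each statement's English description precedes it below -/
import Mathlib

section
/- Let H, U be Hilbert spaces, G : U → H a bounded operator with dense range, Q = G G*, y₀, z¹ ∈ H, and T a bounded operator on H. Define u_α = G*(α I + Q)^{-1}(z¹ − T y₀) for α ∈ (0,1]. Then T y₀ + G u_α → z¹ in H as α → 0⁺. -/
/-!
Write `x = z₁ - T y₀` and `R_α = (αI + GG*)⁻¹`. Since `(αI + GG*) R_α = I`, the terminal state is
`T y₀ + G u_α = z₁ - α R_α x`, so it suffices that `α R_α x → 0`. Pairing the resolvent identity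
with `R_α x` gives `α ‖R_α x‖² + ‖G* R_α x‖² = ⟪x, R_α x⟫`, whence `‖α R_α‖ ≤ 1` and
`‖α R_α (G w)‖ ≤ √α ‖w‖`. So `α R_α → 0` on the dense range of `G`, and the uniform bound
extends this to all of `H`.
-/

open Filter Topology

section DenseConvergence

variable {𝕜 E F ι : Type*} [NontriviallyNormedField 𝕜]
  [NormedAddCommGroup E] [NormedSpace 𝕜 E] [NormedAddCommGroup F] [NormedSpace 𝕜 F]

theorem ContinuousLinearMap.tendsto_apply_zero_of_dense {l : Filter ι} {A : ι → E →L[𝕜] F}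
    {s : Set E} (hs : Dense s) {C : ℝ} (hA : ∀ᶠ i in l, ‖A i‖ ≤ C)
    (h : ∀ y ∈ s, Tendsto (A · y) l (𝓝 0)) (x : E) : Tendsto (A · x) l (𝓝 0) := by
  classical
  -- Truncating `A` where the bound fails yields an equicontinuous family with the same limits.
  set B : ι → E →L[𝕜] F := fun i ↦ if ‖A i‖ ≤ C then A i else 0
  have hAB : ∀ y, (A · y) =ᶠ[l] (B · y) := fun y ↦ hA.mono fun i hi ↦ by simp [B, hi]
  have hB_bdd : ∃ C', ∀ i, ‖B i‖ ≤ C' := ⟨max C 0, fun i ↦ by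
    by_cases hi : ‖A i‖ ≤ C <;> simp [B, hi]⟩
  have hB : Equicontinuous ((↑) ∘ B) := ((NormedSpace.equicontinuous_TFAE B).out 5 1).mp hB_bdd
  have hclosed : IsClosed {y | Tendsto (B · y) l (𝓝 0)} :=
    hB.isClosed_setOfPred_tendsto (f := 0) continuous_const
  have hsub : s ⊆ {y | Tendsto (B · y) l (𝓝 0)} := fun y hy ↦ (h y hy).congr' (hAB y)
  have hx : Tendsto (B · x) l (𝓝 0) := hclosed.closure_subset_iff.mpr hsub (hs x)
  exact hx.congr' (hAB x).symm

end DenseConvergence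

section Resolvent

open ContinuousLinearMap

variable {H U : Type*}
  [NormedAddCommGroup H] [InnerProductSpace ℝ H] [CompleteSpace H]
  [NormedAddCommGroup U] [InnerProductSpace ℝ U] [CompleteSpace U]
  {G : U →L[ℝ] H} {α : ℝ} {R : H →L[ℝ] H}

theorem smul_add_apply_adjoint_apply_eq_of_comp_eq_id
    (hR : (α • ContinuousLinearMap.id ℝ H + G ∘L adjoint G) ∘L R = ContinuousLinearMap.id ℝ H)
    (x : H) : α • R x + G (adjoint G (R x)) = x := by
  simpa using congr($hR x)

theorem mul_norm_sq_add_norm_adjoint_sq_eq_inner (hR : ∀ x, α • R x + G (adjoint G (R x)) = x)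
    (x : H) : α * ‖R x‖ ^ 2 + ‖adjoint G (R x)‖ ^ 2 = inner ℝ x (R x) := by
  calc α * ‖R x‖ ^ 2 + ‖adjoint G (R x)‖ ^ 2 = inner ℝ (α • R x + G (adjoint G (R x))) (R x) := by
        rw [inner_add_left, real_inner_smul_left, ← adjoint_inner_right G,
          real_inner_self_eq_norm_sq, real_inner_self_eq_norm_sq]
    _ = inner ℝ x (R x) := by rw [hR x]

theorem norm_smul_resolvent_le (hα : 0 ≤ α) (hR : ∀ x, α • R x + G (adjoint G (R x)) = x)
    (x : H) : ‖α • R x‖ ≤ ‖x‖ := by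
  have hid := mul_norm_sq_add_norm_adjoint_sq_eq_inner hR x
  have hcs := real_inner_le_norm x (R x)
  have hsq : α * ‖R x‖ ^ 2 ≤ ‖x‖ * ‖R x‖ := by nlinarith [sq_nonneg ‖adjoint G (R x)‖]
  rw [norm_smul, Real.norm_of_nonneg hα]
  rcases (norm_nonneg (R x)).eq_or_lt with h0 | hpos
  · simp [← h0]
  · nlinarith

theorem norm_smul_resolvent_apply_le (hα : 0 ≤ α) (hR : ∀ x, α • R x + G (adjoint G (R x)) = x)
    (w : U) : ‖α • R (G w)‖ ≤ √α * ‖w‖ := by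
  have hid := mul_norm_sq_add_norm_adjoint_sq_eq_inner hR (G w)
  have hcs := real_inner_le_norm w (adjoint G (R (G w)))
  -- `⟪G w, R (G w)⟫ = ⟪w, G* R (G w)⟫` is absorbed by `‖G* R (G w)‖²` up to `‖w‖² / 4`.
  rw [adjoint_inner_right] at hcs
  have hsq : α * ‖R (G w)‖ ^ 2 ≤ ‖w‖ ^ 2 := by
    nlinarith [sq_nonneg (‖w‖ - ‖adjoint G (R (G w))‖), norm_nonneg w]
  rw [norm_smul, Real.norm_of_nonneg hα, ← pow_le_pow_iff_left₀ (by positivity) (by positivity)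
    two_ne_zero, mul_pow, mul_pow, Real.sq_sqrt hα]
  nlinarith

end Resolvent

/-- Abstract form of Lemma 3.2: with `u_α = G*(αI+Q)⁻¹(z¹ - T y₀)` and `G` of dense
range, the terminal state `T y₀ + G u_α` converges to `z¹` as `α → 0⁺`. -/
theorem stmt_13 {H U : Type*}
    [NormedAddCommGroup H] [InnerProductSpace ℝ H] [CompleteSpace H]
    [NormedAddCommGroup U] [InnerProductSpace ℝ U] [CompleteSpace U]
    (G : U →L[ℝ] H) (hG : DenseRange G)
    (inv : ℝ → H →L[ℝ] H)
    (hinv : ∀ α : ℝ, 0 < α →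
      (α • ContinuousLinearMap.id ℝ H + G ∘L ContinuousLinearMap.adjoint G) ∘L inv α
        = ContinuousLinearMap.id ℝ H ∧
      inv α ∘L (α • ContinuousLinearMap.id ℝ H + G ∘L ContinuousLinearMap.adjoint G)
        = ContinuousLinearMap.id ℝ H)
    (T : H →L[ℝ] H) (y₀ z₁ : H)
    (u : ℝ → U)
    (hu : ∀ α : ℝ, u α = ContinuousLinearMap.adjoint G (inv α (z₁ - T y₀))) :
    Tendsto (fun α : ℝ => T y₀ + G (u α)) (nhdsWithin 0 (Set.Ioi 0)) (nhds z₁) := by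
  have hR (α : ℝ) (hα : 0 < α) (x : H) :
      α • inv α x + G (ContinuousLinearMap.adjoint G (inv α x)) = x :=
    smul_add_apply_adjoint_apply_eq_of_comp_eq_id (hinv α hα).1 x
  have hstate : ∀ᶠ α in 𝓝[>] (0 : ℝ), z₁ - α • inv α (z₁ - T y₀) = T y₀ + G (u α) :=
    eventually_mem_nhdsWithin.mono fun α hα ↦ by
      rw [hu]
      linear_combination (norm := module) -hR α hα (z₁ - T y₀)
  have hbound : ∀ᶠ α in 𝓝[>] (0 : ℝ), ‖α • inv α‖ ≤ 1 :=
    eventually_mem_nhdsWithin.mono fun α hα ↦ ContinuousLinearMap.opNorm_le_bound _ zero_le_one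
      fun x ↦ by simpa using norm_smul_resolvent_le (le_of_lt hα) (hR α hα) x
  have hrange : ∀ y ∈ Set.range G, Tendsto (fun α ↦ (α • inv α) y) (𝓝[>] 0) (𝓝 0) := by
    rintro _ ⟨w, rfl⟩
    have hsqrt : Tendsto (fun α : ℝ ↦ √α * ‖w‖) (𝓝[>] 0) (𝓝 0) := by
      simpa using ((Real.continuous_sqrt.tendsto 0).mul_const ‖w‖).mono_left nhdsWithin_le_nhds
    exact squeeze_zero_norm' (eventually_mem_nhdsWithin.mono fun α hα ↦
      norm_smul_resolvent_apply_le (le_of_lt hα) (hR α hα) w) hsqrt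
  have hdefect := ContinuousLinearMap.tendsto_apply_zero_of_dense hG hbound hrange (z₁ - T y₀)
  simpa using (tendsto_const_nhds (x := z₁)).sub hdefect |>.congr' hstate
end

section
/- Let H be a Hilbert space, Q a bounded nonnegative self-adjoint operator on H, and z ∈ H. Then the map α ↦ ‖α (α I + Q)^{-1} z‖ is monotone nondecreasing on (0, ∞). -/
open RealInnerProductSpace

/-- For a bounded nonnegative self-adjoint operator `Q` on a Hilbert space and `z ∈ H`,
the map `α ↦ ‖α (α I + Q)⁻¹ z‖` is monotone nondecreasing on `(0, ∞)`. -/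
theorem stmt_15 {H : Type*}
    [NormedAddCommGroup H] [InnerProductSpace ℝ H] [CompleteSpace H]
    (Q : H →L[ℝ] H) (hsa : IsSelfAdjoint Q) (hpos : ∀ z : H, 0 ≤ ⟪Q z, z⟫)
    (inv : ℝ → H →L[ℝ] H)
    (hinv : ∀ α : ℝ, 0 < α →
      (α • ContinuousLinearMap.id ℝ H + Q) ∘L inv α = ContinuousLinearMap.id ℝ H ∧
      inv α ∘L (α • ContinuousLinearMap.id ℝ H + Q) = ContinuousLinearMap.id ℝ H)
    (z : H) :
    ∀ α β : ℝ, 0 < α → α ≤ β → ‖α • inv α z‖ ≤ ‖β • inv β z‖ := by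
  intro α β hα hαβ
  have hβ : 0 < β := lt_of_lt_of_le hα hαβ
  obtain ⟨ha1, ha2⟩ := hinv α hα
  obtain ⟨hb1, hb2⟩ := hinv β hβ
  -- pointwise inverse facts
  have hA1 : ∀ w : H, α • inv α w + Q (inv α w) = w := by
    intro w
    have := ContinuousLinearMap.ext_iff.mp ha1 w
    simpa using this
  have hA2 : ∀ w : H, inv α (α • w + Q w) = w := by
    intro w
    have := ContinuousLinearMap.ext_iff.mp ha2 w
    simpa using this
  have hB1 : ∀ w : H, β • inv β w + Q (inv β w) = w := by
    intro w
    have := ContinuousLinearMap.ext_iff.mp hb1 w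
    simpa using this
  have hB2 : ∀ w : H, inv β (β • w + Q w) = w := by
    intro w
    have := ContinuousLinearMap.ext_iff.mp hb2 w
    simpa using this
  -- Q commutes with the resolvents
  have hQα : ∀ w : H, Q (inv α w) = inv α (Q w) := by
    intro w
    have h : inv α (Q (α • inv α w + Q (inv α w))) = inv α (Q w) := by rw [hA1]
    rw [map_add, map_smul] at h
    rw [hA2 (Q (inv α w))] at h
    exact h
  have hQβ : ∀ w : H, Q (inv β w) = inv β (Q w) := by
    intro w
    have h : inv β (Q (β • inv β w + Q (inv β w))) = inv β (Q w) := by rw [hB1]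
    rw [map_add, map_smul] at h
    rw [hB2 (Q (inv β w))] at h
    exact h
  -- resolvents commute with A = α•id + Q (pointwise, for inv β)
  have hβA : ∀ w : H, inv β (α • w + Q w) = α • inv β w + Q (inv β w) := by
    intro w
    rw [map_add, map_smul, hQβ]
  -- resolvents commute with each other
  have hcomm : inv α (inv β z) = inv β (inv α z) := by
    have h1 : inv α (inv β z) = inv α (inv β (α • inv α z + Q (inv α z))) := by
      rw [hA1]
    rw [h1, hβA, hA2]
  -- resolvent identity at z
  have hres : β • inv β z - α • inv α z = (β - α) • Q (inv α (inv β z)) := by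
    have e1 : α • inv α z = z - Q (inv α z) := by
      have := hA1 z; linear_combination (norm := abel) this
    have e2 : β • inv β z = z - Q (inv β z) := by
      have := hB1 z; linear_combination (norm := abel) this
    have e3 : inv α z - inv β z = (β - α) • inv α (inv β z) := by
      have h1 : inv α z = β • inv α (inv β z) + inv α (Q (inv β z)) := by
        conv_lhs => rw [← hB1 z]
        rw [map_add, map_smul]
      have h2 : inv β z = α • inv β (inv α z) + inv β (Q (inv α z)) := by
        conv_lhs => rw [← hA1 z]
        rw [map_add, map_smul]
      have h3 : inv α (Q (inv β z)) = inv β (Q (inv α z)) := by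
        rw [← hQα, ← hQβ, hcomm]
      rw [← hcomm, ← h3] at h2
      set q := inv α (Q (inv β z)) with hq
      set p := inv α (inv β z) with hp
      rw [h1, h2, sub_smul]
      abel
    have key : Q (inv α z) - Q (inv β z) = (β - α) • Q (inv α (inv β z)) := by
      rw [← map_sub, e3, map_smul]
    rw [e1, e2, ← key]
    abel
  -- positivity of ⟪Q (inv γ x), x⟫
  have hposα : ∀ x : H, 0 ≤ ⟪Q (inv α x), x⟫ := by
    intro x
    set y := inv α x with hy
    have hx : x = α • y + Q y := (hA1 x).symm
    rw [hx, inner_add_right, real_inner_smul_right]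
    have h1 := hpos y
    have h2 : (0:ℝ) ≤ ⟪Q y, Q y⟫ := real_inner_self_nonneg
    nlinarith
  have hposβ : ∀ x : H, 0 ≤ ⟪Q (inv β x), x⟫ := by
    intro x
    set y := inv β x with hy
    have hx : x = β • y + Q y := (hB1 x).symm
    rw [hx, inner_add_right, real_inner_smul_right]
    have h1 := hpos y
    have h2 : (0:ℝ) ≤ ⟪Q y, Q y⟫ := real_inner_self_nonneg
    nlinarith
  set u := α • inv α z with hu
  set v := β • inv β z with hv
  have hw : v - u = (β - α) • Q (inv α (inv β z)) := hres
  have h1 : 0 ≤ ⟪u, v - u⟫ := by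
    rw [hw, hu, real_inner_smul_left, real_inner_smul_right, hcomm, real_inner_comm]
    have h := hposβ (inv α z)
    have := mul_nonneg hα.le (mul_nonneg (sub_nonneg.mpr hαβ) h)
    linarith
  have h2 : 0 ≤ ⟪v, v - u⟫ := by
    rw [hw, hv, real_inner_smul_left, real_inner_smul_right, real_inner_comm]
    have h := hposα (inv β z)
    have := mul_nonneg hβ.le (mul_nonneg (sub_nonneg.mpr hαβ) h)
    linarith
  have hsq : ‖u‖ ^ 2 ≤ ‖v‖ ^ 2 := by
    have e : ‖v‖ ^ 2 - ‖u‖ ^ 2 = ⟪v, v - u⟫ + ⟪u, v - u⟫ := by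
      rw [inner_sub_right, inner_sub_right, ← real_inner_self_eq_norm_sq,
        ← real_inner_self_eq_norm_sq, real_inner_comm u v]
      ring
    nlinarith
  nlinarith [norm_nonneg u, norm_nonneg v]
end

section
/- Let H, U be Hilbert spaces, G : U → H bounded, Q = G G*. For z ∈ H and α > 0 set u_α = G*(α I + Q)^{-1} z. Then ‖u_α‖² = ⟨Q (α I + Q)^{-1} z, (α I + Q)^{-1} z⟩, and if z ∉ range(G) with range(G) dense, then ‖u_α‖ → ∞ as α → 0⁺ or G u_α = z for some α; in particular ⟨u_α, u_α⟩ ≤ (1/α)⟨z − G u_α, z⟩. -/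
/-!
Write `w_α = (α + Q)⁻¹ z`, so that `u_α = G* w_α` and `α w_α + Q w_α = z`. Then `z - G u_α = α w_α`
and `⟪w_α, z⟫ = α ‖w_α‖² + ‖u_α‖²`, which gives the first two claims. For `β ≤ α` the same identity
gives `‖u_β - u_α‖² ≤ ‖u_β‖² - ‖u_α‖²`, so `‖u_α‖` increases as `α ↓ 0` and, if it stays bounded,
`u_α` converges to some `u₀`. Then `G*(z - G u₀) = lim α u_α = 0`, i.e. `z - G u₀ ⊥ range G`, and
density of the range forces `G u₀ = z`.
-/

open Filter RealInnerProductSpace Set Topology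

lemma AntitoneOn.bddAbove_image_Ioi_of_not_tendsto_atTop {α β : Type*} [LinearOrder α]
    [TopologicalSpace α] [OrderTopology α] [LinearOrder β] {f : α → β} {a : α}
    (hf : AntitoneOn f (Ioi a)) (h : ¬Tendsto f (𝓝[>] a) atTop) : BddAbove (f '' Ioi a) := by
  contrapose! h
  refine tendsto_atTop.2 fun C => ?_
  obtain ⟨_, ⟨b, hb, rfl⟩, hCb⟩ := not_bddAbove_iff.1 h C
  filter_upwards [Ioo_mem_nhdsGT hb] with x hx
  exact hCb.le.trans (hf hx.1 hb hx.2.le)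

lemma cauchy_map_of_dist_sq_le {β E : Type*} [PseudoMetricSpace E] {l : Filter β}
    {v : β → E} {f : β → ℝ} (hf : Cauchy (l.map f))
    (hvf : ∀ᶠ p in l ×ˢ l, dist (v p.1) (v p.2) ^ 2 ≤ dist (f p.1) (f p.2)) :
    Cauchy (l.map v) := by
  obtain ⟨hl, hf⟩ := cauchy_map_iff.1 hf
  refine cauchy_map_iff.2 ⟨hl, Metric.uniformity_basis_dist.tendsto_right_iff.2 fun ε hε => ?_⟩
  filter_upwards [hvf, Metric.uniformity_basis_dist.tendsto_right_iff.1 hf (ε ^ 2)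
    (by positivity)] with p hp hfp
  exact (pow_lt_pow_iff_left₀ dist_nonneg hε.le two_ne_zero).1 (hp.trans_lt hfp)

lemma tendsto_norm_atTop_or_exists_tendsto_nhdsGT {E : Type*} [NormedAddCommGroup E]
    [CompleteSpace E] {v : ℝ → E}
    (hv : ∀ ⦃β α : ℝ⦄, 0 < β → β ≤ α → ‖v β - v α‖ ^ 2 ≤ ‖v β‖ ^ 2 - ‖v α‖ ^ 2) :
    Tendsto (‖v ·‖) (𝓝[>] 0) atTop ∨ ∃ v₀, Tendsto v (𝓝[>] 0) (𝓝 v₀) := by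
  have hanti : AntitoneOn (‖v ·‖) (Ioi 0) := fun β hβ α _ hβα =>
    (pow_le_pow_iff_left₀ (norm_nonneg _) (norm_nonneg _) two_ne_zero).1
      (sub_nonneg.1 ((sq_nonneg _).trans (hv hβ hβα)))
  refine or_iff_not_imp_left.2 fun hT => ?_
  obtain ⟨C, hC⟩ := hanti.bddAbove_image_Ioi_of_not_tendsto_atTop hT
  set f : ℝ → ℝ := (‖v ·‖ ^ 2)
  have hf_anti : AntitoneOn f (Ioi 0) := fun β hβ α hα hβα =>
    pow_le_pow_left₀ (norm_nonneg _) (hanti hβ hα hβα) 2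
  have hf_bdd : BddAbove (f '' Ioi 0) := by
    refine ⟨C ^ 2, ?_⟩
    rintro _ ⟨α, hα, rfl⟩
    exact pow_le_pow_left₀ (norm_nonneg _) (hC ⟨α, hα, rfl⟩) 2
  refine cauchy_map_iff_exists_tendsto.1
    (cauchy_map_of_dist_sq_le (hf_anti.tendsto_nhdsGT hf_bdd).cauchy_map ?_)
  filter_upwards [prod_mem_prod self_mem_nhdsWithin self_mem_nhdsWithin]
  rintro ⟨β, α⟩ ⟨hβ, hα⟩
  simp only [dist_eq_norm, Real.norm_eq_abs]
  rcases le_total β α with hβα | hαβ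
  · exact (hv hβ hβα).trans (le_abs_self _)
  · rw [norm_sub_rev, abs_sub_comm]
    exact (hv hα hαβ).trans (le_abs_self _)

namespace ContinuousLinearMap

variable {H U : Type*}
  [NormedAddCommGroup H] [InnerProductSpace ℝ H] [CompleteSpace H]
  [NormedAddCommGroup U] [InnerProductSpace ℝ U] [CompleteSpace U]
  (G : U →L[ℝ] H)

lemma norm_adjoint_apply_sq (w : H) : ‖adjoint G w‖ ^ 2 = ⟪(G ∘L adjoint G) w, w⟫ := by
  rw [← real_inner_self_eq_norm_sq, comp_apply, adjoint_inner_right]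

lemma inner_adjoint_apply_self_le {α : ℝ} (hα : 0 < α) {w z : H}
    (hz : α • w + G (adjoint G w) = z) :
    ⟪adjoint G w, adjoint G w⟫ ≤ 1 / α * ⟪z - G (adjoint G w), z⟫ := by
  have hres : z - G (adjoint G w) = α • w := by rw [← hz, add_sub_cancel_right]
  have hwz : ⟪w, z⟫ = α * ‖w‖ ^ 2 + ⟪adjoint G w, adjoint G w⟫ := by
    rw [← hz, inner_add_right, real_inner_smul_right, real_inner_self_eq_norm_sq,
      ← adjoint_inner_left]
  rw [hres, real_inner_smul_left, one_div, inv_mul_cancel_left₀ hα.ne', hwz]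
  exact le_add_of_nonneg_left (by positivity)

/-- With `d = w' - w` the hypothesis reads `(α - β) w = (β + Q) d`, whence
`(α - β) ⟪G* w, G* d⟫ = β ‖G* d‖² + ‖Q d‖² ≥ 0`. -/
lemma norm_adjoint_sub_sq_le {α β : ℝ} (hβ : 0 ≤ β) (hβα : β < α) {w w' : H}
    (h : α • w + G (adjoint G w) = β • w' + G (adjoint G w')) :
    ‖adjoint G w' - adjoint G w‖ ^ 2 ≤ ‖adjoint G w'‖ ^ 2 - ‖adjoint G w‖ ^ 2 := by
  set d := w' - w
  have hd : (α - β) • w = β • d + G (adjoint G d) := by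
    simp only [d, map_sub, smul_sub, sub_smul]
    linear_combination (norm := module) h
  have key : (α - β) * ⟪adjoint G w, adjoint G d⟫
      = β * ‖adjoint G d‖ ^ 2 + ‖G (adjoint G d)‖ ^ 2 := by
    rw [← real_inner_smul_left, ← map_smul, hd, map_add, map_smul, inner_add_left,
      real_inner_smul_left, real_inner_self_eq_norm_sq, adjoint_inner_left,
      real_inner_self_eq_norm_sq]
  have hpos : 0 ≤ ⟪adjoint G w, adjoint G d⟫ := by
    refine nonneg_of_mul_nonneg_right ?_ (sub_pos.2 hβα)
    rw [key]
    positivity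
  have hw' : adjoint G w' = adjoint G w + adjoint G d := by simp [d]
  rw [hw', add_sub_cancel_left, norm_add_sq_real]
  linarith

variable {G} {z : H} {w : ℝ → H}

lemma norm_adjoint_resolvent_sub_sq_le (hw : ∀ α > 0, α • w α + G (adjoint G (w α)) = z)
    ⦃β α : ℝ⦄ (hβ : 0 < β) (hβα : β ≤ α) :
    ‖adjoint G (w β) - adjoint G (w α)‖ ^ 2
      ≤ ‖adjoint G (w β)‖ ^ 2 - ‖adjoint G (w α)‖ ^ 2 := by
  rcases hβα.eq_or_lt with rfl | hlt
  · simp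
  · exact norm_adjoint_sub_sq_le G hβ.le hlt ((hw α (hβ.trans hlt)).trans (hw β hβ).symm)

lemma apply_eq_of_tendsto_adjoint_resolvent
    (hw : ∀ α > 0, α • w α + G (adjoint G (w α)) = z) (hG : DenseRange G) {u₀ : U}
    (hu₀ : Tendsto (fun α => adjoint G (w α)) (𝓝[>] 0) (𝓝 u₀)) : G u₀ = z := by
  have hres : ∀ α ∈ Ioi (0 : ℝ), adjoint G (z - G (adjoint G (w α))) = α • adjoint G (w α) := by
    intro α (hα : 0 < α)
    rw [← hw α hα, add_sub_cancel_right, map_smul]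
  have hlim : Tendsto (fun α => adjoint G (z - G (adjoint G (w α)))) (𝓝[>] 0)
      (𝓝 (adjoint G (z - G u₀))) :=
    ((adjoint G).continuous.tendsto _).comp
      (tendsto_const_nhds.sub ((G.continuous.tendsto _).comp hu₀))
  have hlim' : Tendsto (fun α => α • adjoint G (w α)) (𝓝[>] 0) (𝓝 0) := by
    simpa using (tendsto_nhdsWithin_of_tendsto_nhds tendsto_id).smul hu₀
  have hker : adjoint G (z - G u₀) = 0 :=
    tendsto_nhds_unique (hlim.congr' (eventually_nhdsWithin_of_forall hres)) hlim'
  refine (sub_eq_zero.1 (hG.eq_zero_of_inner_left ℝ fun v => ?_)).symm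
  rw [← adjoint_inner_left, hker, inner_zero_left]

lemma tendsto_norm_adjoint_resolvent_atTop
    (hw : ∀ α > 0, α • w α + G (adjoint G (w α)) = z) (hG : DenseRange G) (hz : z ∉ range G) :
    Tendsto (fun α => ‖adjoint G (w α)‖) (𝓝[>] 0) atTop := by
  refine (tendsto_norm_atTop_or_exists_tendsto_nhdsGT
    (norm_adjoint_resolvent_sub_sq_le hw)).resolve_right ?_
  rintro ⟨u₀, hu₀⟩
  exact hz ⟨u₀, apply_eq_of_tendsto_adjoint_resolvent hw hG hu₀⟩

end ContinuousLinearMap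

/-- For `u_α = G*(αI+Q)⁻¹ z`: the norm identity
`‖u_α‖² = ⟨Q (αI+Q)⁻¹ z, (αI+Q)⁻¹ z⟩`, the inequality
`⟨u_α, u_α⟩ ≤ (1/α) ⟨z - G u_α, z⟩`, and, if `G` has dense range and
`z ∉ range G`, then `‖u_α‖ → ∞` as `α → 0⁺` or `G u_α = z` for some `α > 0`. -/
theorem stmt_16 {H U : Type*}
    [NormedAddCommGroup H] [InnerProductSpace ℝ H] [CompleteSpace H]
    [NormedAddCommGroup U] [InnerProductSpace ℝ U] [CompleteSpace U]
    (G : U →L[ℝ] H)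
    (inv : ℝ → H →L[ℝ] H)
    (hinv : ∀ α : ℝ, 0 < α →
      (α • ContinuousLinearMap.id ℝ H + G ∘L ContinuousLinearMap.adjoint G) ∘L inv α
        = ContinuousLinearMap.id ℝ H ∧
      inv α ∘L (α • ContinuousLinearMap.id ℝ H + G ∘L ContinuousLinearMap.adjoint G)
        = ContinuousLinearMap.id ℝ H)
    (z : H)
    (u : ℝ → U)
    (hu : ∀ α : ℝ, u α = ContinuousLinearMap.adjoint G (inv α z)) :
    (∀ α : ℝ, 0 < α →
      ‖u α‖ ^ 2 = ⟪(G ∘L ContinuousLinearMap.adjoint G) (inv α z), inv α z⟫) ∧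
    (∀ α : ℝ, 0 < α → ⟪u α, u α⟫ ≤ (1 / α) * ⟪z - G (u α), z⟫) ∧
    (DenseRange G → z ∉ Set.range G →
      (Tendsto (fun α : ℝ => ‖u α‖) (nhdsWithin 0 (Set.Ioi 0)) atTop ∨
        ∃ α : ℝ, 0 < α ∧ G (u α) = z)) := by
  obtain rfl : u = fun α => ContinuousLinearMap.adjoint G (inv α z) := funext hu
  have hres : ∀ α > 0, α • inv α z + G (ContinuousLinearMap.adjoint G (inv α z)) = z :=
    fun α hα => by simpa using congr($((hinv α hα).1) z)
  exact ⟨fun α _ => G.norm_adjoint_apply_sq _,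
    fun α hα => G.inner_adjoint_apply_self_le hα (hres α hα),
    fun hG hz => Or.inl (ContinuousLinearMap.tendsto_norm_adjoint_resolvent_atTop hres hG hz)⟩
end
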